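/- arXiv:1510.05311 — 5 statements merged into one kernel-verified Lean document; each statement's English description precedes it below -/
import Mathlib

section
/- The capacity of the q-ary partial erasure channel equals 1 - ε·log_q(M), measured in q-ary symbols per channel use; that is, max over input distributions {p_x} of I(X;Y) = log q - ε·log M (in nats/bits), attained by the uniform input distribution p_x = 1/q. -/
/-!
Every row of the QPEC has the same entropy `h = -(1-ε) log(1-ε) - ε log(ε/C)`, with
`C = (q-1).choose (M-1)`, so `I(p) = H(Y) - h`. By Gibbs' inequality `H(Y)` is at most the
cross-entropy of `Y` against the output law `r` of the uniform input, which is `(1-ε)/q` on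
singletons and `εM/(qC)` on `M`-subsets. That cross-entropy is an average over `x` of
`-∑_y P(x,y) log r(y)`, and this does not depend on `x`; so `H(Y)` is maximised by the uniform
input, and the maximum minus `h` simplifies to `log q - ε log M`.
-/

open Finset Real

lemma neg_mul_log_le_neg_mul_log_add_sub {a b : ℝ} (ha : 0 ≤ a) (hb : 0 < b) :
    -(a * log a) ≤ -(a * log b) + (b - a) := by
  have hscale : negMulLog a = -(a * log b) + b * negMulLog (a / b) := by
    conv_lhs => rw [← mul_div_cancel₀ a hb.ne']
    rw [negMulLog_mul, negMulLog]
    field_simp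
  have hle := mul_le_mul_of_nonneg_left (negMulLog_le_one_sub_self (div_nonneg ha hb.le)) hb.le
  rw [mul_sub, mul_div_cancel₀ a hb.ne', mul_one] at hle
  have hdef : negMulLog a = -(a * log a) := by rw [negMulLog, neg_mul]
  linarith

theorem neg_sum_mul_log_le_neg_sum_mul_log {ι : Type*} [Fintype ι] {Q r : ι → ℝ}
    (hQ : ∀ i, 0 ≤ Q i) (hr : ∀ i, 0 ≤ r i) (hsupp : ∀ i, r i = 0 → Q i = 0)
    (hsum : ∑ i, Q i = ∑ i, r i) :
    -∑ i, Q i * log (Q i) ≤ -∑ i, Q i * log (r i) := by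
  have hterm : ∀ i, -(Q i * log (Q i)) ≤ -(Q i * log (r i)) + (r i - Q i) := by
    intro i
    rcases (hr i).eq_or_lt with h | h
    · simp [hsupp i h.symm, ← h]
    · exact neg_mul_log_le_neg_mul_log_add_sub (hQ i) h
  calc -∑ i, Q i * log (Q i) = ∑ i, -(Q i * log (Q i)) := by rw [sum_neg_distrib]
    _ ≤ ∑ i, (-(Q i * log (r i)) + (r i - Q i)) := sum_le_sum fun i _ => hterm i
    _ = -∑ i, Q i * log (r i) := by
      rw [sum_add_distrib, sum_sub_distrib, hsum, sub_self, add_zero, sum_neg_distrib]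

lemma mul_log_mul_eq_mul_log_add (a : ℝ) {t : ℝ} (ht : t ≠ 0) :
    a * log (a * t) = a * log a + a * log t := by
  rcases eq_or_ne a 0 with rfl | ha
  · simp
  · rw [log_mul ha ht, mul_add]

section Channel

variable {α β : Type*} [Fintype α] {W : α → β → ℝ}

lemma sum_mul_eq_of_forall_eq {p f : α → ℝ} {k : ℝ} (hp : ∑ x, p x = 1) (hf : ∀ x, f x = k) :
    ∑ x, p x * f x = k := by
  simp [hf, ← sum_mul, hp]

lemma output_eq_zero_of_output_eq_zero {u : α → ℝ} (hu : ∀ x, 0 < u x)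
    (hW : ∀ x y, 0 ≤ W x y) (p : α → ℝ) {y : β} (hy : ∑ x, u x * W x y = 0) :
    ∑ x, p x * W x y = 0 := by
  have := (sum_eq_zero_iff_of_nonneg fun x _ => mul_nonneg (hu x).le (hW x y)).1 hy
  refine sum_eq_zero fun x hx => ?_
  rw [(mul_eq_zero.1 (this x hx)).resolve_left (hu x).ne', mul_zero]

variable [Fintype β]

lemma sum_output_mul (p : α → ℝ) (g : β → ℝ) :
    ∑ y, (∑ x, p x * W x y) * g y = ∑ x, p x * ∑ y, W x y * g y := by
  simp_rw [sum_mul, mul_sum, mul_assoc]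
  exact sum_comm

lemma sum_output_mul_of_forall_eq {p : α → ℝ} (hp : ∑ x, p x = 1) {g : β → ℝ} {k : ℝ}
    (hg : ∀ x, ∑ y, W x y * g y = k) : ∑ y, (∑ x, p x * W x y) * g y = k := by
  rw [sum_output_mul, sum_mul_eq_of_forall_eq hp hg]

lemma sum_output (hW : ∀ x, ∑ y, W x y = 1) {p : α → ℝ} (hp : ∑ x, p x = 1) :
    ∑ y, ∑ x, p x * W x y = 1 := by
  simpa using sum_output_mul_of_forall_eq (g := 1) hp (by simpa using hW)

theorem neg_sum_output_mul_log_le_of_forall_eq (hW0 : ∀ x y, 0 ≤ W x y) (hW1 : ∀ x, ∑ y, W x y = 1)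
    {u : α → ℝ} (hu0 : ∀ x, 0 < u x) (hu1 : ∑ x, u x = 1)
    {c : ℝ} (hc : ∀ x, ∑ y, W x y * log (∑ x', u x' * W x' y) = c)
    {p : α → ℝ} (hp0 : ∀ x, 0 ≤ p x) (hp1 : ∑ x, p x = 1) :
    -∑ y, (∑ x, p x * W x y) * log (∑ x, p x * W x y) ≤ -c := by
  calc -∑ y, (∑ x, p x * W x y) * log (∑ x, p x * W x y)
      ≤ -∑ y, (∑ x, p x * W x y) * log (∑ x, u x * W x y) :=
        neg_sum_mul_log_le_neg_sum_mul_log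
          (fun y => sum_nonneg fun x _ => mul_nonneg (hp0 x) (hW0 x y))
          (fun y => sum_nonneg fun x _ => mul_nonneg (hu0 x).le (hW0 x y))
          (fun y => output_eq_zero_of_output_eq_zero hu0 hW0 p)
          (by rw [sum_output hW1 hp1, sum_output hW1 hu1])
    _ = -c := by rw [sum_output_mul_of_forall_eq hp1 hc]

theorem neg_sum_output_mul_log_eq_of_forall_eq {u : α → ℝ} (hu1 : ∑ x, u x = 1)
    {c : ℝ} (hc : ∀ x, ∑ y, W x y * log (∑ x', u x' * W x' y) = c) :
    -∑ y, (∑ x, u x * W x y) * log (∑ x, u x * W x y) = -c := by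
  rw [sum_output_mul_of_forall_eq hu1 hc]

end Channel

lemma card_filter_card_eq_and_mem {α : Type*} [Fintype α] [DecidableEq α] (x : α) {k : ℕ}
    (hk : k ≠ 0) : #{y : Finset α | #y = k ∧ x ∈ y} = (Fintype.card α - 1).choose (k - 1) := by
  have hnot : ∀ z ∈ powersetCard (k - 1) (univ.erase x), x ∉ z := fun z hz hx =>
    notMem_erase x univ ((mem_powersetCard.1 hz).1 hx)
  have himage : ({y : Finset α | #y = k ∧ x ∈ y} : Finset (Finset α)) =
      (powersetCard (k - 1) (univ.erase x)).image (insert x) := by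
    ext y
    simp only [mem_filter, mem_univ, true_and, mem_image]
    constructor
    · rintro ⟨hy, hxy⟩
      refine ⟨y.erase x, mem_powersetCard.2 ⟨erase_subset_erase x (subset_univ y), ?_⟩,
        insert_erase hxy⟩
      rw [card_erase_of_mem hxy, hy]
    · rintro ⟨z, hz, rfl⟩
      rw [card_insert_of_notMem (hnot z hz), (mem_powersetCard.1 hz).2]
      exact ⟨Nat.sub_add_cancel (Nat.one_le_iff_ne_zero.2 hk), mem_insert_self x z⟩
  rw [himage, card_image_of_injOn (insert_erase_invOn.2.injOn.mono hnot), card_powersetCard,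
    card_erase_of_mem (mem_univ x), card_univ]

section QPEC

variable {α : Type*} [Fintype α] [DecidableEq α] {M : ℕ} {ε : ℝ}

variable (M ε) in
noncomputable def qpec (x : α) (y : Finset α) : ℝ :=
  if y = {x} then 1 - ε
  else if #y = M ∧ x ∈ y then ε / ((Fintype.card α - 1).choose (M - 1)) else 0

lemma qpec_nonneg (hε0 : 0 ≤ ε) (hε1 : ε ≤ 1) (x : α) (y : Finset α) : 0 ≤ qpec M ε x y := by
  unfold qpec
  split_ifs
  · linarith
  · positivity
  · rfl

lemma qpec_of_card_eq (hM : M ≠ 1) {x : α} {y : Finset α} (hy : #y = M) :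
    qpec M ε x y = if x ∈ y then ε / ((Fintype.card α - 1).choose (M - 1)) else 0 := by
  have hne : y ≠ {x} := by rintro rfl; exact hM (by simpa using hy.symm)
  simp [qpec, hne, hy]

lemma qpec_singleton (hM : M ≠ 1) (x x' : α) :
    qpec M ε x' {x} = if x' = x then 1 - ε else 0 := by
  simp [qpec, Ne.symm hM, eq_comm]

lemma sum_qpec_mul (hM : 2 ≤ M) (hMn : M ≤ Fintype.card α) (x : α) {g : Finset α → ℝ}
    {w : ℝ} (hg : ∀ y, #y = M → x ∈ y → g y = w) :
    ∑ y, qpec M ε x y * g y = (1 - ε) * g {x} + ε * w := by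
  have hC : ((Fintype.card α - 1).choose (M - 1) : ℝ) ≠ 0 :=
    Nat.cast_ne_zero.2 (Nat.choose_pos (by omega)).ne'
  have hsplit : ∀ y, qpec M ε x y * g y = (if {x} = y then (1 - ε) * g {x} else 0) +
      (if #y = M ∧ x ∈ y then ε / ((Fintype.card α - 1).choose (M - 1)) * w else 0) := by
    intro y
    by_cases hxy : y = {x}
    · subst hxy
      have : ¬ (1 = M) := by omega
      simp [qpec, this]
    · by_cases hy : #y = M ∧ x ∈ y
      · simp [qpec, hxy, hy, hg y hy.1 hy.2, Ne.symm hxy]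
      · simp [qpec, hxy, hy, Ne.symm hxy]
  rw [sum_congr rfl fun y _ => hsplit y, sum_add_distrib, sum_ite_eq, ← sum_filter, sum_const,
    card_filter_card_eq_and_mem x (by omega : M ≠ 0), nsmul_eq_mul]
  simp only [mem_univ, if_true]
  field_simp

lemma sum_qpec (hM : 2 ≤ M) (hMn : M ≤ Fintype.card α) (x : α) : ∑ y, qpec M ε x y = 1 := by
  simpa using sum_qpec_mul (ε := ε) (g := 1) (w := 1) hM hMn x (fun _ _ _ => rfl)

lemma sum_qpec_mul_log_qpec (hM : 2 ≤ M) (hMn : M ≤ Fintype.card α) (x : α) :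
    ∑ y, qpec M ε x y * log (qpec M ε x y) =
      (1 - ε) * log (1 - ε) + ε * log (ε / ((Fintype.card α - 1).choose (M - 1))) := by
  rw [sum_qpec_mul hM hMn x fun y hy hxy => by rw [qpec_of_card_eq (by omega) hy, if_pos hxy],
    qpec_singleton (by omega), if_pos rfl]

lemma sum_mul_qpec_singleton (hM : M ≠ 1) (u : α → ℝ) (x : α) :
    ∑ x', u x' * qpec M ε x' {x} = (1 - ε) * u x := by
  simp [qpec_singleton hM, mul_comm]

lemma sum_mul_qpec_of_card_eq (hM : M ≠ 1) (u : α → ℝ) {y : Finset α} (hy : #y = M) :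
    ∑ x, u x * qpec M ε x y = ε * ((∑ x ∈ y, u x) / ((Fintype.card α - 1).choose (M - 1))) := by
  simp only [qpec_of_card_eq hM hy, mul_ite, mul_zero, sum_ite_mem, univ_inter, ← sum_mul]
  ring

lemma sum_qpec_mul_log_uniform_output (hM : 2 ≤ M) (hMn : M ≤ Fintype.card α) (x : α) :
    ∑ y, qpec M ε x y * log (∑ x', 1 / (Fintype.card α : ℝ) * qpec M ε x' y) =
      (1 - ε) * log ((1 - ε) * (1 / Fintype.card α)) +
        ε * log (ε * (M * (1 / Fintype.card α) / ((Fintype.card α - 1).choose (M - 1)))) := by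
  refine (sum_qpec_mul (w := log (ε * (M * (1 / Fintype.card α) /
    ((Fintype.card α - 1).choose (M - 1))))) hM hMn x fun y hy _ => ?_).trans ?_
  · rw [sum_mul_qpec_of_card_eq (by omega) _ hy, sum_const, hy, nsmul_eq_mul]
  · rw [sum_mul_qpec_singleton (by omega)]

end QPEC

lemma qpec_negEntropy_sub_crossEntropy {n m C ε : ℝ} (hn : n ≠ 0) (hm : m ≠ 0) (hC : C ≠ 0) :
    (1 - ε) * log (1 - ε) + ε * log (ε / C) -
        ((1 - ε) * log ((1 - ε) * (1 / n)) + ε * log (ε * (m * (1 / n) / C))) =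
      log n - ε * log m := by
  rw [div_eq_mul_inv ε, mul_log_mul_eq_mul_log_add _ (inv_ne_zero hC),
    mul_log_mul_eq_mul_log_add _ (by positivity), mul_log_mul_eq_mul_log_add _ (by positivity)]
  simp only [one_div, log_inv, log_div (mul_ne_zero hm (inv_ne_zero hn)) hC,
    log_mul hm (inv_ne_zero hn)]
  ring

theorem qpec_capacity_general (q M : ℕ) (hM : 2 ≤ M) (hMq : M ≤ q)
    (ε : ℝ) (hε0 : 0 ≤ ε) (hε1 : ε ≤ 1)
    (P : Fin q → Finset (Fin q) → ℝ)
    (hP : ∀ x y, P x y =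
      if y = {x} then 1 - ε
      else if y.card = M ∧ x ∈ y then ε / ((q - 1).choose (M - 1)) else 0)
    (I : (Fin q → ℝ) → ℝ)
    (hI : ∀ p, I p =
      (-∑ y : Finset (Fin q), (∑ x, p x * P x y) * Real.log (∑ x, p x * P x y))
        - (-∑ x, p x * ∑ y : Finset (Fin q), P x y * Real.log (P x y))) :
    IsGreatest (I '' {p | (∀ x, 0 ≤ p x) ∧ ∑ x, p x = 1})
        (Real.log q - ε * Real.log M)
      ∧ I (fun _ => 1 / q) = Real.log q - ε * Real.log M := by
  obtain rfl : P = qpec M ε := by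
    funext x y
    rw [hP, qpec, Fintype.card_fin]
  have hMq' : M ≤ Fintype.card (Fin q) := by rwa [Fintype.card_fin]
  have hq0 : (0 : ℝ) < q := by exact_mod_cast (by omega : 0 < q)
  have hu1 : ∑ _x : Fin q, 1 / (q : ℝ) = 1 := by simp [hq0.ne']
  have hI' : ∀ p, ∑ x, p x = 1 → I p =
      -∑ y, (∑ x, p x * qpec M ε x y) * log (∑ x, p x * qpec M ε x y) +
        ((1 - ε) * log (1 - ε) + ε * log (ε / ((q - 1).choose (M - 1)))) := fun p hp => by
    rw [hI, sum_mul_eq_of_forall_eq hp (by simpa using sum_qpec_mul_log_qpec hM hMq'),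
      sub_neg_eq_add]
  have hcross := sum_qpec_mul_log_uniform_output (ε := ε) hM hMq'
  simp only [Fintype.card_fin] at hcross
  have hidentity := qpec_negEntropy_sub_crossEntropy (ε := ε) hq0.ne' (by positivity : (M : ℝ) ≠ 0)
    (Nat.cast_ne_zero.2 (Nat.choose_pos (by omega : M - 1 ≤ q - 1)).ne')
  have hvalue : I (fun _ => 1 / q) = log q - ε * log M := by
    rw [hI' _ hu1, neg_sum_output_mul_log_eq_of_forall_eq hu1 hcross]
    linarith
  refine ⟨⟨⟨_, ⟨fun _ => by positivity, hu1⟩, hvalue⟩, ?_⟩, hvalue⟩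
  rintro _ ⟨p, ⟨hp0, hp1⟩, rfl⟩
  have hbound := neg_sum_output_mul_log_le_of_forall_eq (qpec_nonneg hε0 hε1) (sum_qpec hM hMq')
    (fun _ => one_div_pos.2 hq0) hu1 hcross hp0 hp1
  rw [hI' p hp1]
  linarith

/-- The capacity of the QPEC equals `log q - ε·log M`, attained by the uniform
input distribution. -/
theorem qpec_capacity (q M : ℕ) (hq : 2 ≤ q) (hM : 2 ≤ M) (hMq : M ≤ q)
    (ε : ℝ) (hε0 : 0 ≤ ε) (hε1 : ε ≤ 1)
    (P : Fin q → Finset (Fin q) → ℝ)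
    (hP : ∀ x y, P x y =
      if y = {x} then 1 - ε
      else if y.card = M ∧ x ∈ y then ε / ((q - 1).choose (M - 1)) else 0)
    (I : (Fin q → ℝ) → ℝ)
    (hI : ∀ p, I p =
      (-∑ y : Finset (Fin q), (∑ x, p x * P x y) * Real.log (∑ x, p x * P x y))
        - (-∑ x, p x * ∑ y : Finset (Fin q), P x y * Real.log (P x y))) :
    IsGreatest (I '' {p | (∀ x, 0 ≤ p x) ∧ ∑ x, p x = 1})
        (Real.log q - ε * Real.log M)
      ∧ I (fun _ => 1 / q) = Real.log q - ε * Real.log M :=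
  qpec_capacity_general q M hM hMq ε hε0 hε1 P hP I hI
end

section
/- Let G be a finite abelian group and let p(G) denote the smallest prime factor of |G|. For nonempty subsets A, B of G, |A + B| ≥ min(p(G), |A| + |B| - 1). -/
open Pointwise

/-- Károlyi's theorem (abelian case): for nonempty subsets `A`, `B` of a finite
abelian group `G`, `|A + B| ≥ min(p(G), |A| + |B| - 1)` where `p(G)` is the
smallest prime factor of `|G|`. -/
theorem karolyi_abelian (G : Type*) [AddCommGroup G] [Fintype G] [DecidableEq G]
    (A B : Finset G) (hA : A.Nonempty) (hB : B.Nonempty) :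
    min (Fintype.card G).minFac (A.card + B.card - 1) ≤ (A + B).card := by
  have h := cauchy_davenport_minOrder_add hA hB
  have hmf : ((Fintype.card G).minFac : ℕ∞) ≤ Monoid.minOrder (Multiplicative G) := by
    rw [Monoid.le_minOrder]
    intro a ha _
    have h1 : orderOf a ∣ Fintype.card G := by
      have := (orderOf_dvd_card (x := a))
      rwa [Fintype.card_multiplicative] at this
    have h2 : 2 ≤ orderOf a := by
      have hpos : 0 < orderOf a := orderOf_pos a
      have hne : orderOf a ≠ 1 := fun h => ha (orderOf_eq_one_iff.mp h)
      omega
    exact_mod_cast Nat.minFac_le_of_dvd h2 h1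
  have : min ((Fintype.card G).minFac : ℕ∞) ((A.card + B.card - 1 : ℕ) : ℕ∞) ≤ ((A + B).card : ℕ∞) :=
    le_trans (le_min (min_le_of_left_le hmf) (min_le_right _ _)) h
  have := min_le_iff.mp this
  rcases this with h' | h'
  · exact min_le_of_left_le (by exact_mod_cast h')
  · exact min_le_of_right_le (by exact_mod_cast h')
end

section
/- Let S_1, ..., S_d be nonempty subsets of a finite abelian group G and let p be the smallest prime factor of |G|. Then |S_1 + S_2 + ... + S_d| ≥ min(p, Σ_{j=1}^d |S_j| - d + 1). -/
open Pointwise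

lemma karolyi_sum_nonempty {G : Type*} [AddCommGroup G] [DecidableEq G] :
    ∀ (d : ℕ) (S : Fin d → Finset G), (∀ j, (S j).Nonempty) → (∑ j, S j).Nonempty := by
  intro d
  induction d with
  | zero => intro S _; simp [Finset.univ_eq_empty]
  | succ n ih =>
    intro S hS
    rw [Fin.sum_univ_succ]
    exact (hS 0).add (ih _ fun j => hS j.succ)

lemma karolyi_minFac_le_minOrder {G : Type*} [AddCommGroup G] [Fintype G]
    (h : Fintype.card G ≠ 1) :
    ((Fintype.card G).minFac : ℕ∞) ≤ AddMonoid.minOrder G := by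
  rw [AddMonoid.le_minOrder]
  intro a ha _
  have h1 : addOrderOf a ∣ Fintype.card G := addOrderOf_dvd_card
  have h2 : addOrderOf a ≠ 1 := by simpa using ha
  have := (Nat.minFac_le_of_dvd (Nat.Prime.two_le (Nat.minFac_prime h2))
    ((Nat.minFac_dvd _).trans h1))
  exact_mod_cast this.trans (Nat.minFac_le (addOrderOf_pos a))

/-- Extension of Károlyi's theorem to `d` subsets:
`|S_1 + ... + S_d| ≥ min(p, Σ|S_j| - d + 1)` with `p` the smallest prime factor
of `|G|`. -/
theorem karolyi_many_sets (G : Type*) [AddCommGroup G] [Fintype G] [DecidableEq G]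
    (d : ℕ) (S : Fin d → Finset G) (hS : ∀ j, (S j).Nonempty) :
    min (Fintype.card G).minFac ((∑ j, (S j).card) - d + 1) ≤ (∑ j, S j).card := by
  by_cases hG : Fintype.card G = 1
  · have : (Fintype.card G).minFac = 1 := by simp [hG]
    have h1 : 1 ≤ (∑ j, S j).card := Finset.Nonempty.card_pos (karolyi_sum_nonempty d S hS)
    omega
  have hp : ((Fintype.card G).minFac : ℕ∞) ≤ AddMonoid.minOrder G :=
    karolyi_minFac_le_minOrder hG
  induction d with
  | zero => simp
  | succ n ih =>
    have hS' : ∀ j : Fin n, (S j.succ).Nonempty := fun j => hS j.succ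
    have hT : (∑ j : Fin n, S j.succ).Nonempty := karolyi_sum_nonempty n _ hS'
    have hcd := cauchy_davenport_minOrder_add (hS 0) hT
    have hcd' : min (Fintype.card G).minFac
        ((S 0).card + (∑ j : Fin n, S j.succ).card - 1)
        ≤ (S 0 + ∑ j : Fin n, S j.succ).card := by
      have : ((min (Fintype.card G).minFac
          ((S 0).card + (∑ j : Fin n, S j.succ).card - 1) : ℕ) : ℕ∞)
          ≤ ((S 0 + ∑ j : Fin n, S j.succ).card : ℕ∞) := by
        push_cast
        exact le_trans (min_le_min hp le_rfl) hcd
      exact_mod_cast this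
    have hih := ih (fun j => S j.succ) hS'
    beta_reduce at hih
    have hcards : ∀ j : Fin n, 1 ≤ (S j.succ).card := fun j => (hS' j).card_pos
    have htail : n ≤ ∑ j : Fin n, (S j.succ).card := by
      calc n = ∑ _j : Fin n, 1 := by simp
        _ ≤ _ := Finset.sum_le_sum fun j _ => hcards j
    have h0 : 1 ≤ (S 0).card := (hS 0).card_pos
    rw [Fin.sum_univ_succ, Fin.sum_univ_succ]
    omega
end

section
/- Fix a ground set of q elements and cardinalities m_1, ..., m_d with μ = min_j m_j. The number of tuples (A_1, ..., A_d) of subsets with |A_j| = m_j whose intersection A_1 ∩ ... ∩ A_d has cardinality exactly m (for 0 ≤ m ≤ μ) equals K_m = Σ_{s=0}^{μ-m} (-1)^s · υ_{m+s} · C(m+s, m), where υ_i = C(q, i) · Π_{j=1}^d C(q-i, m_j - i). -/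
/-!
Let `N k` be the number of tuples whose intersection has exactly `k` elements. Double counting
the pairs `(S, A)` with `|S| = i` and `S ⊆ ⋂ A_j` (choose `S`, then each `A_j` among the
`m_j`-sets containing `S`) gives `υ_i = Σ_k C(k, i) N k`, where `k` ranges up to `μ` because the
intersection lies in a set of size `μ`. Binomial inversion, which rests on
`C(k, m + s) C(m + s, m) = C(k, m) C(k - m, s)` and `Σ_s (-1)^s C(n, s) = [n = 0]`, recovers `N m`.
-/

open Finset

theorem sum_range_neg_one_pow_mul_choose_mul_choose {k m L : ℕ} (hk : k ≤ m + L) :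
    ∑ s ∈ range (L + 1), (-1 : ℤ) ^ s * k.choose (m + s) * (m + s).choose m =
      if k = m then 1 else 0 := by
  have hsplit : ∀ s, (k.choose (m + s) * (m + s).choose m : ℤ) =
      k.choose m * (k - m).choose s := by
    intro s
    have := Nat.choose_mul (n := k) (Nat.le_add_right m s)
    rw [Nat.add_sub_cancel_left] at this
    exact_mod_cast this
  simp_rw [mul_assoc, hsplit, mul_left_comm _ (k.choose m : ℤ), ← mul_sum]
  rcases lt_trichotomy k m with hlt | rfl | hgt
  · simp [Nat.choose_eq_zero_of_lt hlt, hlt.ne]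
  · simp [sum_range_succ']
  · obtain ⟨n, hn⟩ : ∃ n, k - m = n + 1 := ⟨k - m - 1, by omega⟩
    rw [hn, Int.alternating_sum_range_choose_eq_choose,
      Nat.choose_eq_zero_of_lt (show n < L by omega)]
    simp [hgt.ne']

theorem binomial_inversion {υ N : ℕ → ℤ} {K m : ℕ} (hm : m ≤ K)
    (hυ : ∀ i ≤ K, υ i = ∑ k ∈ range (K + 1), k.choose i * N k) :
    N m = ∑ s ∈ range (K - m + 1), (-1) ^ s * υ (m + s) * (m + s).choose m := by
  have hυ' : ∀ s ∈ range (K - m + 1), (-1) ^ s * υ (m + s) * (m + s).choose m =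
      ∑ k ∈ range (K + 1), N k * ((-1) ^ s * k.choose (m + s) * (m + s).choose m) := by
    intro s hs
    rw [hυ _ (by simp at hs; omega), mul_sum, sum_mul]
    exact sum_congr rfl fun k _ => by ring
  rw [sum_congr rfl hυ', sum_comm]
  simp_rw [← mul_sum]
  rw [sum_congr rfl fun k hk => by
    rw [sum_range_neg_one_pow_mul_choose_mul_choose (by simp at hk; omega)]]
  simp [hm]

theorem Finset.sum_comp_eq_sum_range_card_smul {β M : Type*} [AddCommMonoid M] {s : Finset β}
    {g : β → ℕ} {K : ℕ} (hg : ∀ x ∈ s, g x ≤ K) (f : ℕ → M) :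
    ∑ x ∈ s, f (g x) = ∑ k ∈ range (K + 1), #{x ∈ s | g x = k} • f k := by
  rw [← sum_fiberwise_of_maps_to (g := g) (t := range (K + 1))
    fun x hx => mem_range.2 (Nat.lt_succ_of_le (hg x hx))]
  refine sum_congr rfl fun k _ => ?_
  rw [sum_congr rfl fun x hx => by rw [(mem_filter.1 hx).2], sum_const]

section Tuples

variable {α ι : Type*} [Fintype α] [Fintype ι] [DecidableEq ι]

variable (α) in
def tuplesWithCards (ms : ι → ℕ) : Finset (ι → Finset α) :=
  Fintype.piFinset fun j => powersetCard (ms j) univ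

theorem mem_tuplesWithCards {ms : ι → ℕ} {A : ι → Finset α} :
    A ∈ tuplesWithCards α ms ↔ ∀ j, #(A j) = ms j := by
  simp [tuplesWithCards]

variable [DecidableEq α]

theorem card_filter_subset_inf_tuplesWithCards (ms : ι → ℕ) {S : Finset α}
    (hS : ∀ j, #S ≤ ms j) :
    #{A ∈ tuplesWithCards α ms | S ⊆ univ.inf A} =
      ∏ j, (Fintype.card α - #S).choose (ms j - #S) := by
  have hfilter : {A ∈ tuplesWithCards α ms | S ⊆ univ.inf A} =
      Fintype.piFinset fun j => {B ∈ powersetCard (ms j) univ | S ⊆ B} := by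
    ext A
    simp [tuplesWithCards, Finset.le_inf_iff, forall_and]
  rw [hfilter, Fintype.card_piFinset]
  exact prod_congr rfl fun j _ =>
    card_filter_powersetCard_subset S univ (ms j) (subset_univ S) (hS j)

theorem sum_choose_card_inf_tuplesWithCards (ms : ι → ℕ) {i : ℕ} (hi : ∀ j, i ≤ ms j) :
    ∑ A ∈ tuplesWithCards α ms, (#(univ.inf A)).choose i =
      (Fintype.card α).choose i * ∏ j, (Fintype.card α - i).choose (ms j - i) := by
  have hchoose : ∀ A : ι → Finset α, (#(univ.inf A)).choose i =
      #((powersetCard i univ).bipartiteAbove (fun A S => S ⊆ univ.inf A) A) := by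
    intro A
    rw [← card_powersetCard, bipartiteAbove]
    congr 1
    ext S
    simp [mem_powersetCard, and_comm]
  simp_rw [hchoose]
  rw [sum_card_bipartiteAbove_eq_sum_card_bipartiteBelow, ← card_univ (α := α),
    ← card_powersetCard, ← smul_eq_mul, ← sum_const]
  refine sum_congr rfl fun S hS => ?_
  rw [mem_powersetCard] at hS
  rw [bipartiteBelow, card_filter_subset_inf_tuplesWithCards ms fun j => hS.2 ▸ hi j, hS.2,
    card_univ]

end Tuples

theorem count_intersection_card_general (q d : ℕ) (ms : Fin d → ℕ) (μ m : ℕ)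
    (hμ1 : ∃ j, ms j = μ) (hμ2 : ∀ j, μ ≤ ms j) (hm : m ≤ μ) :
    (Nat.card {A : Fin d → Finset (Fin q) //
        (∀ j, (A j).card = ms j) ∧ (Finset.univ.inf A).card = m} : ℤ)
      = ∑ s ∈ Finset.range (μ - m + 1),
          (-1 : ℤ) ^ s
            * ((q.choose (m + s)) * ∏ j, (q - (m + s)).choose (ms j - (m + s)))
            * ((m + s).choose m) := by
  let N : ℕ → ℕ := fun k => #{A ∈ tuplesWithCards (Fin q) ms | #(univ.inf A) = k}
  have hcard : Nat.card {A : Fin d → Finset (Fin q) //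
      (∀ j, (A j).card = ms j) ∧ (univ.inf A).card = m} = N m := by
    rw [Nat.card_eq_fintype_card, Fintype.card_subtype]
    congr 1
    ext A
    simp [mem_tuplesWithCards]
  obtain ⟨j₀, hj₀⟩ := hμ1
  have hinf_le : ∀ A ∈ tuplesWithCards (Fin q) ms, #(univ.inf A) ≤ μ := fun A hA => by
    rw [← hj₀, ← mem_tuplesWithCards.1 hA j₀]
    exact card_le_card (inf_le (mem_univ j₀))
  have hυ : ∀ i ≤ μ, ((q.choose i * ∏ j, (q - i).choose (ms j - i) : ℕ) : ℤ) =
      ∑ k ∈ range (μ + 1), k.choose i * (N k : ℤ) := fun i hi => by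
    have hdouble := sum_choose_card_inf_tuplesWithCards (α := Fin q) ms fun j => hi.trans (hμ2 j)
    rw [Fintype.card_fin] at hdouble
    rw [← hdouble, Nat.cast_sum,
      sum_comp_eq_sum_range_card_smul hinf_le fun k => (k.choose i : ℤ)]
    exact sum_congr rfl fun k _ => by rw [nsmul_eq_mul, mul_comm]
  rw [hcard, binomial_inversion hm hυ]
  push_cast
  rfl

/-- Inclusion-exclusion count: the number of tuples of subsets of prescribed
cardinalities `m_j` of a `q`-element ground set whose intersection has
cardinality exactly `m` is `K_m = Σ_{s=0}^{μ-m} (-1)^s υ_{m+s} C(m+s, m)`,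
where `υ_i = C(q,i) Π_j C(q-i, m_j-i)` and `μ = min_j m_j`. -/
theorem count_intersection_card (q d : ℕ) (hd : 0 < d) (ms : Fin d → ℕ) (μ m : ℕ)
    (hμ1 : ∃ j, ms j = μ) (hμ2 : ∀ j, μ ≤ ms j) (hm : m ≤ μ) :
    (Nat.card {A : Fin d → Finset (Fin q) //
        (∀ j, (A j).card = ms j) ∧ (Finset.univ.inf A).card = m} : ℤ)
      = ∑ s ∈ Finset.range (μ - m + 1),
          (-1 : ℤ) ^ s
            * ((q.choose (m + s)) * ∏ j, (q - (m + s)).choose (ms j - (m + s)))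
            * ((m + s).choose m) :=
  count_intersection_card_general q d ms μ m hμ1 hμ2 hm
end

section
/- With h_ε as above, define ε* = sup{ε ∈ [0,1] : lim_{l→∞} h_ε^l(ε) = 0}. Then ε* = sup{ε ∈ [0,1] : the equation x = h_ε(x) has no solution x in (0,1]}. -/
open Set Filter

noncomputable def psiT (m : ℕ) (t : ℝ) : ℝ := ((m:ℝ)+1)*t^m - (m:ℝ)*t^(m+1)

lemma psiT_hasDerivAt (m : ℕ) (t : ℝ) :
    HasDerivAt (psiT m) ((m:ℝ)*((m:ℝ)+1)*(t^(m-1) - t^m)) t := by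
  have h1 := (hasDerivAt_pow m t).const_mul ((m:ℝ)+1)
  have h2 := (hasDerivAt_pow (m+1) t).const_mul (m:ℝ)
  have e : (m:ℝ)*((m:ℝ)+1)*(t^(m-1) - t^m)
      = ((m:ℝ)+1)*((m:ℝ)*t^(m-1)) - (m:ℝ)*(((m+1:ℕ):ℝ)*t^(m+1-1)) := by
    simp only [Nat.add_sub_cancel]; push_cast; ring
  rw [e]
  exact h1.sub h2

lemma psiT_continuous (m : ℕ) : Continuous (psiT m) := by
  unfold psiT; fun_prop

lemma psiT_mono (m : ℕ) : MonotoneOn (psiT m) (Icc 0 1) := by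
  apply monotoneOn_of_deriv_nonneg (convex_Icc 0 1) (psiT_continuous m).continuousOn
  · intro t _
    exact (psiT_hasDerivAt m t).differentiableAt.differentiableWithinAt
  · intro t ht
    rw [interior_Icc] at ht
    rw [(psiT_hasDerivAt m t).deriv]
    have hp : t^m ≤ t^(m-1) := pow_le_pow_of_le_one ht.1.le ht.2.le (Nat.sub_le m 1)
    have : (0:ℝ) ≤ (m:ℝ)*((m:ℝ)+1) := by positivity
    exact mul_nonneg this (sub_nonneg.2 hp)

lemma psiT_mem (m : ℕ) {t : ℝ} (ht : t ∈ Icc (0:ℝ) 1) : psiT m t ∈ Icc (0:ℝ) 1 := by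
  constructor
  · have h1 : t^(m+1) ≤ t^m := pow_le_pow_of_le_one ht.1 ht.2 (Nat.le_succ m)
    have h2 : (m:ℝ)*t^(m+1) ≤ (m:ℝ)*t^m := mul_le_mul_of_nonneg_left h1 (Nat.cast_nonneg m)
    have h3 : (0:ℝ) ≤ t^m := pow_nonneg ht.1 m
    simp only [psiT]; linarith
  · have := psiT_mono m ht (right_mem_Icc.2 zero_le_one) ht.2
    simpa [psiT] using this

noncomputable def innerV (dc : ℕ) (ρ : ℕ → ℝ) (x : ℝ) : ℝ :=
  ∑ j ∈ Finset.Icc 2 dc, ρ j * (1 - psiT (j-2) (1-x))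

noncomputable def outerV (dv : ℕ) (lam : ℕ → ℝ) (y : ℝ) : ℝ :=
  ∑ i ∈ Finset.Icc 2 dv, lam i * y^(i-1)

lemma innerV_eq (dc : ℕ) (ρ : ℕ → ℝ) (hρ1 : ∑ j ∈ Finset.Icc 2 dc, ρ j = 1) (x : ℝ) :
    1 - (∑ j ∈ Finset.Icc 2 dc, ρ j * (1 - x) ^ (j - 1))
      - x * ∑ j ∈ Finset.Icc 2 dc, ρ j * ((j:ℝ) - 1) * (1 - x) ^ (j - 2)
      = innerV dc ρ x := by
  have hsum : innerV dc ρ x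
      = (∑ j ∈ Finset.Icc 2 dc, ρ j) - ∑ j ∈ Finset.Icc 2 dc, ρ j * psiT (j-2) (1-x) := by
    rw [← Finset.sum_sub_distrib]
    exact Finset.sum_congr rfl fun j _ => by ring
  rw [hsum, hρ1]
  have : ∑ j ∈ Finset.Icc 2 dc, ρ j * psiT (j-2) (1-x)
      = (∑ j ∈ Finset.Icc 2 dc, ρ j * (1 - x) ^ (j - 1))
        + x * ∑ j ∈ Finset.Icc 2 dc, ρ j * ((j:ℝ) - 1) * (1 - x) ^ (j - 2) := by
    rw [Finset.mul_sum, ← Finset.sum_add_distrib]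
    refine Finset.sum_congr rfl fun j hj => ?_
    obtain ⟨m, rfl⟩ : ∃ m, j = m + 2 := ⟨j - 2, by have := (Finset.mem_Icc.1 hj).1; omega⟩
    simp only [psiT, show m+2-1 = m+1 from rfl, show m+2-2 = m from rfl]
    push_cast
    ring
  rw [this]
  ring

lemma innerV_mem (dc : ℕ) (ρ : ℕ → ℝ) (hρ : ∀ i, 0 ≤ ρ i)
    (hρ1 : ∑ j ∈ Finset.Icc 2 dc, ρ j = 1) {x : ℝ} (hx : x ∈ Icc (0:ℝ) 1) :
    innerV dc ρ x ∈ Icc (0:ℝ) 1 := by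
  have h1x : 1 - x ∈ Icc (0:ℝ) 1 := ⟨by linarith [hx.2], by linarith [hx.1]⟩
  constructor
  · exact Finset.sum_nonneg fun j _ =>
      mul_nonneg (hρ j) (by linarith [(psiT_mem (j-2) h1x).2])
  · calc innerV dc ρ x ≤ ∑ j ∈ Finset.Icc 2 dc, ρ j := by
          refine Finset.sum_le_sum fun j _ => ?_
          have := (psiT_mem (j-2) h1x).1
          nlinarith [hρ j]
      _ = 1 := hρ1

lemma innerV_mono (dc : ℕ) (ρ : ℕ → ℝ) (hρ : ∀ i, 0 ≤ ρ i)
    {x y : ℝ} (hx : x ∈ Icc (0:ℝ) 1) (hy : y ∈ Icc (0:ℝ) 1) (hxy : x ≤ y) :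
    innerV dc ρ x ≤ innerV dc ρ y := by
  have h1x : 1 - x ∈ Icc (0:ℝ) 1 := ⟨by linarith [hx.2], by linarith [hx.1]⟩
  have h1y : 1 - y ∈ Icc (0:ℝ) 1 := ⟨by linarith [hy.2], by linarith [hy.1]⟩
  refine Finset.sum_le_sum fun j _ => ?_
  have := psiT_mono (j-2) h1y h1x (by linarith)
  nlinarith [hρ j]

lemma outerV_mem (dv : ℕ) (lam : ℕ → ℝ) (hlam : ∀ i, 0 ≤ lam i)
    (hlam1 : ∑ i ∈ Finset.Icc 2 dv, lam i = 1) {y : ℝ} (hy : y ∈ Icc (0:ℝ) 1) :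
    outerV dv lam y ∈ Icc (0:ℝ) 1 := by
  constructor
  · exact Finset.sum_nonneg fun i _ => mul_nonneg (hlam i) (pow_nonneg hy.1 _)
  · calc outerV dv lam y ≤ ∑ i ∈ Finset.Icc 2 dv, lam i := by
          refine Finset.sum_le_sum fun i _ => ?_
          have h1 : y^(i-1) ≤ 1 := pow_le_one₀ hy.1 hy.2
          nlinarith [hlam i]
      _ = 1 := hlam1

lemma outerV_mono (dv : ℕ) (lam : ℕ → ℝ) (hlam : ∀ i, 0 ≤ lam i)
    {y z : ℝ} (hy : 0 ≤ y) (hyz : y ≤ z) :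
    outerV dv lam y ≤ outerV dv lam z :=
  Finset.sum_le_sum fun i _ =>
    mul_le_mul_of_nonneg_left (pow_le_pow_left₀ hy hyz _) (hlam i)

lemma innerV_continuous (dc : ℕ) (ρ : ℕ → ℝ) : Continuous (innerV dc ρ) := by
  unfold innerV
  refine continuous_finset_sum _ fun j _ => Continuous.mul continuous_const ?_
  exact continuous_const.sub ((psiT_continuous (j-2)).comp (continuous_const.sub continuous_id))

lemma outerV_continuous (dv : ℕ) (lam : ℕ → ℝ) : Continuous (outerV dv lam) := by
  unfold outerV; fun_prop

/-- Fixed-point characterization of the threshold: `ε* = sup{ε ∈ [0,1] :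
lim_l h_ε^[l](ε) = 0}` equals `sup{ε ∈ [0,1] : x = h_ε(x)` has no solution
`x ∈ (0,1]}`. -/
theorem threshold_fixed_point_characterization (dv dc : ℕ) (lam ρ : ℕ → ℝ)
    (hlam : ∀ i, 0 ≤ lam i) (hρ : ∀ i, 0 ≤ ρ i)
    (hlam1 : ∑ i ∈ Finset.Icc 2 dv, lam i = 1)
    (hρ1 : ∑ i ∈ Finset.Icc 2 dc, ρ i = 1)
    (h : ℝ → ℝ → ℝ)
    (hh : ∀ ε x, h ε x = ε * ∑ i ∈ Finset.Icc 2 dv, lam i *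
        (1 - (∑ j ∈ Finset.Icc 2 dc, ρ j * (1 - x) ^ (j - 1))
           - x * ∑ j ∈ Finset.Icc 2 dc, ρ j * (j - 1 : ℝ) * (1 - x) ^ (j - 2)) ^ (i - 1)) :
    sSup {ε | ε ∈ Set.Icc (0 : ℝ) 1
        ∧ Filter.Tendsto (fun l => (h ε)^[l] ε) Filter.atTop (nhds 0)}
      = sSup {ε | ε ∈ Set.Icc (0 : ℝ) 1 ∧ ∀ x ∈ Set.Ioc (0 : ℝ) 1, x ≠ h ε x} := by
  -- reformulate h
  have hform : ∀ ε x, h ε x = ε * outerV dv lam (innerV dc ρ x) := by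
    intro ε x
    rw [hh, ← innerV_eq dc ρ hρ1 x]
    rfl
  -- basic properties of h
  have hrange : ∀ ε ∈ Icc (0:ℝ) 1, ∀ x ∈ Icc (0:ℝ) 1, h ε x ∈ Icc 0 ε := by
    intro ε hε x hx
    rw [hform]
    have ho := outerV_mem dv lam hlam hlam1 (innerV_mem dc ρ hρ hρ1 hx)
    constructor
    · exact mul_nonneg hε.1 ho.1
    · nlinarith [ho.2, hε.1]
  have hmx : ∀ ε, 0 ≤ ε → ∀ x ∈ Icc (0:ℝ) 1, ∀ y ∈ Icc (0:ℝ) 1, x ≤ y → h ε x ≤ h ε y := by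
    intro ε hε x hx y hy hxy
    rw [hform, hform]
    exact mul_le_mul_of_nonneg_left
      (outerV_mono dv lam hlam (innerV_mem dc ρ hρ hρ1 hx).1
        (innerV_mono dc ρ hρ hx hy hxy)) hε
  have hcont : ∀ ε, Continuous (h ε) := by
    intro ε
    have : h ε = fun x => ε * outerV dv lam (innerV dc ρ x) := funext (hform ε)
    rw [this]
    exact continuous_const.mul
      ((outerV_continuous dv lam).comp (innerV_continuous dc ρ))
  -- the two sets are equal
  have key : {ε | ε ∈ Set.Icc (0 : ℝ) 1
        ∧ Filter.Tendsto (fun l => (h ε)^[l] ε) Filter.atTop (nhds 0)}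
      = {ε | ε ∈ Set.Icc (0 : ℝ) 1 ∧ ∀ x ∈ Set.Ioc (0 : ℝ) 1, x ≠ h ε x} := by
    ext ε
    simp only [mem_setOf_eq]
    constructor
    · rintro ⟨hε, hlim⟩
      refine ⟨hε, fun x hx hfix => ?_⟩
      have hx01 : x ∈ Icc (0:ℝ) 1 := ⟨hx.1.le, hx.2⟩
      have hxε : x ≤ ε := by
        have := (hrange ε hε x hx01).2
        linarith [hfix ▸ this]
      -- iterates stay ≥ x
      have hiter : ∀ l, x ≤ (h ε)^[l] ε ∧ (h ε)^[l] ε ∈ Icc (0:ℝ) 1 := by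
        intro l
        induction l with
        | zero => exact ⟨hxε, hε⟩
        | succ n ih =>
          rw [Function.iterate_succ_apply']
          have h1 := hrange ε hε _ ih.2
          refine ⟨?_, ⟨h1.1, le_trans h1.2 hε.2⟩⟩
          calc x = h ε x := hfix
            _ ≤ h ε ((h ε)^[n] ε) := hmx ε hε.1 x hx01 _ ih.2 ih.1
      have : x ≤ 0 := ge_of_tendsto' hlim fun l => (hiter l).1
      linarith [hx.1]
    · rintro ⟨hε, hnofix⟩
      refine ⟨hε, ?_⟩
      set a : ℕ → ℝ := fun l => (h ε)^[l] ε with ha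
      have hmem : ∀ l, a l ∈ Icc (0:ℝ) 1 := by
        intro l
        induction l with
        | zero => exact hε
        | succ n ih =>
          have := hrange ε hε _ ih
          simp only [ha, Function.iterate_succ_apply']
          exact ⟨this.1, le_trans this.2 hε.2⟩
      have hanti : Antitone a := by
        apply antitone_nat_of_succ_le
        intro n
        induction n with
        | zero =>
          simpa [ha] using (hrange ε hε ε hε).2
        | succ n ih =>
          have e1 : a (n+1) = h ε (a n) := by simp [ha, Function.iterate_succ_apply']
          have e2 : a (n+2) = h ε (a (n+1)) := by simp [ha, Function.iterate_succ_apply']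
          rw [e2]
          calc h ε (a (n+1)) ≤ h ε (a n) := hmx ε hε.1 _ (hmem (n+1)) _ (hmem n) ih
            _ = a (n+1) := e1.symm
      have hbdd : BddBelow (range a) := ⟨0, by rintro y ⟨l, rfl⟩; exact (hmem l).1⟩
      have hlim : Tendsto a atTop (nhds (⨅ l, a l)) := tendsto_atTop_ciInf hanti hbdd
      set L := ⨅ l, a l with hL
      have hL0 : 0 ≤ L := le_ciInf fun l => (hmem l).1
      have hL1 : L ≤ 1 := le_trans (ciInf_le hbdd 0) (hmem 0).2
      have hfixL : h ε L = L := by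
        have h1 : Tendsto (fun l => a (l+1)) atTop (nhds L) :=
          hlim.comp (tendsto_add_atTop_nat 1)
        have h2 : Tendsto (fun l => h ε (a l)) atTop (nhds (h ε L)) :=
          ((hcont ε).continuousAt).tendsto.comp hlim
        have h3 : (fun l => a (l+1)) = fun l => h ε (a l) := by
          funext l; simp [ha, Function.iterate_succ_apply']
        rw [h3] at h1
        exact tendsto_nhds_unique h2 h1
      have hL' : L = 0 := by
        by_contra hne
        have hLpos : 0 < L := lt_of_le_of_ne hL0 (Ne.symm hne)
        exact hnofix L ⟨hLpos, hL1⟩ hfixL.symm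
      rw [hL'] at hlim
      exact hlim
  rw [key]
end
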